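/- For every k ≥ 1, the function g_k = ADDR_2^{∘k} (the k-fold composition of the address function ADDR_2, on n_k = 6^k variables) satisfies alt(g_k) ≥ 5^k and s(g_k) ≤ 3^k, and hence alt(g_k) ≥ s(g_k)^{log_3 5}; moreover DT(g_k) = 3^k = n_k^{log_6 3}. -/

import Mathlib

open Finset

/-- The maximal chain in the Boolean hypercube corresponding to a permutation `σ`:
its `k`-th element is the point whose `i`-th coordinate is `1` iff `σ i < k`. -/
def chainOf {n : ℕ} (σ : Equiv.Perm (Fin n)) (k : Fin (n + 1)) : Fin n → Bool :=
  fun i => decide ((σ i : ℕ) < (k : ℕ))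

/-- The number of alternations of `f` along the chain of `σ`. -/
def altOn {n : ℕ} (f : (Fin n → Bool) → Bool) (σ : Equiv.Perm (Fin n)) : ℕ :=
  (Finset.univ.filter fun k : Fin n =>
    f (chainOf σ k.castSucc) ≠ f (chainOf σ k.succ)).card

/-- The alternation of a Boolean function: the maximum number of value changes
along any maximal chain from `0^n` to `1^n`. -/
def alt {n : ℕ} (f : (Fin n → Bool) → Bool) : ℕ :=
  Finset.univ.sup (altOn f)

/-- The number of decreases (`1 → 0` changes) of `f` along the chain of `σ`. -/
def dcOn {n : ℕ} (f : (Fin n → Bool) → Bool) (σ : Equiv.Perm (Fin n)) : ℕ :=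
  (Finset.univ.filter fun k : Fin n =>
    f (chainOf σ k.castSucc) = true ∧ f (chainOf σ k.succ) = false).card

/-- The decrease of a Boolean function: the maximum number of `1 → 0` changes
along any maximal chain from `0^n` to `1^n`. -/
def dc {n : ℕ} (f : (Fin n → Bool) → Bool) : ℕ :=
  Finset.univ.sup (dcOn f)

/-- Deterministic decision trees on `n` Boolean variables. -/
inductive DTree (n : ℕ) : Type where
  | leaf : Bool → DTree n
  | node : Fin n → DTree n → DTree n → DTree n

namespace DTree

/-- Evaluation of a decision tree on an input. -/
def eval {n : ℕ} : DTree n → (Fin n → Bool) → Bool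
  | leaf b, _ => b
  | node i t0 t1, x => if x i then eval t1 x else eval t0 x

/-- Depth of a decision tree. -/
def depth {n : ℕ} : DTree n → ℕ
  | leaf _ => 0
  | node _ t0 t1 => max (depth t0) (depth t1) + 1

end DTree

/-- Minimum depth of a deterministic decision tree computing `f`. -/
noncomputable def DT {n : ℕ} (f : (Fin n → Bool) → Bool) : ℕ :=
  sInf {d | ∃ t : DTree n, (∀ x, t.eval x = f x) ∧ t.depth = d}

/-- Flip the `i`-th bit of `x`. -/
def flipBit {n : ℕ} (x : Fin n → Bool) (i : Fin n) : Fin n → Bool :=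
  Function.update x i (!x i)

/-- Sensitivity of `f` at `x`. -/
def sensAt {n : ℕ} (f : (Fin n → Bool) → Bool) (x : Fin n → Bool) : ℕ :=
  (Finset.univ.filter fun i => f (flipBit x i) ≠ f x).card

/-- Sensitivity of `f`. -/
def sens {n : ℕ} (f : (Fin n → Bool) → Bool) : ℕ :=
  Finset.univ.sup fun x : Fin n → Bool => sensAt f x

/-- Total influence of `f`: the average sensitivity over a uniformly random input. -/
noncomputable def influence {n : ℕ} (f : (Fin n → Bool) → Bool) : ℝ :=
  (∑ x : Fin n → Bool, (sensAt f x : ℝ)) / 2 ^ n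

/-- Fourier coefficient of a real-valued function on the Boolean cube. -/
noncomputable def bFourier {n : ℕ} (g : (Fin n → Bool) → ℝ) (S : Finset (Fin n)) : ℝ :=
  (∑ x : Fin n → Bool, g x * (-1 : ℝ) ^ (S.filter fun i => x i = true).card) / 2 ^ n

/-- The `±1`-valued version `1 - 2f` of a `{0,1}`-valued Boolean function. -/
def toPM {n : ℕ} (f : (Fin n → Bool) → Bool) : (Fin n → Bool) → ℝ :=
  fun x => 1 - 2 * (if f x then (1 : ℝ) else 0)

/-- Sparsity of a real-valued function on the Boolean cube: the number of nonzero
Fourier coefficients. -/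
noncomputable def sparsityR {n : ℕ} (g : (Fin n → Bool) → ℝ) : ℕ :=
  letI := Classical.decPred fun S : Finset (Fin n) => bFourier g S ≠ 0
  (Finset.univ.filter fun S : Finset (Fin n) => bFourier g S ≠ 0).card

/-- Sparsity of a `{0,1}`-valued Boolean function, i.e. the sparsity of `1 - 2f`. -/
noncomputable def sparsity {n : ℕ} (f : (Fin n → Bool) → Bool) : ℕ :=
  sparsityR (toPM f)

/-- Evaluation of a multilinear polynomial, given by its coefficients indexed by
monomials (subsets of variables), on a Boolean input. -/
def mlEval {n : ℕ} {R : Type*} [CommRing R] (c : Finset (Fin n) → R) (x : Fin n → Bool) : R :=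
  ∑ S : Finset (Fin n), c S * ∏ i ∈ S, (if x i then (1 : R) else 0)

/-- `c` is the (unique) multilinear polynomial over `R` agreeing with `f` on the cube. -/
def Represents {n : ℕ} {R : Type*} [CommRing R] (c : Finset (Fin n) → R)
    (f : (Fin n → Bool) → Bool) : Prop :=
  ∀ x, mlEval c x = if f x then 1 else 0

/-- The degree of the multilinear polynomial over `R` agreeing with `f`. -/
noncomputable def degRing {n : ℕ} (R : Type*) [CommRing R] (f : (Fin n → Bool) → Bool) : ℕ :=
  sInf {d | ∃ c : Finset (Fin n) → R, Represents c f ∧ ∀ S, c S ≠ 0 → S.card ≤ d}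

/-- Real degree `deg f`. -/
noncomputable def degR {n : ℕ} (f : (Fin n → Bool) → Bool) : ℕ := degRing ℝ f

/-- Degree over `ℤ_m`; `degMod 2 f` is the `𝔽₂`-degree. -/
noncomputable def degMod {n : ℕ} (m : ℕ) (f : (Fin n → Bool) → Bool) : ℕ := degRing (ZMod m) f

/-- Block composition `f ∘ g` of Boolean functions. -/
def comp {m n : ℕ} (f : (Fin m → Bool) → Bool) (g : (Fin n → Bool) → Bool) :
    (Fin (m * n) → Bool) → Bool :=
  fun x => f fun i => g fun j => x (finProdFinEquiv (i, j))

/-- `iterComp h k` is the `(k+1)`-fold composition `h^{∘(k+1)}`. -/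
def iterComp {n : ℕ} (h : (Fin n → Bool) → Bool) : (k : ℕ) → (Fin (n ^ (k + 1)) → Bool) → Bool
  | 0 => fun x => h fun i => x (Fin.cast (pow_one n).symm i)
  | k + 1 => fun x =>
      comp (iterComp h (k)) h fun i => x (Fin.cast (pow_succ n (k + 1)).symm i)

/-- The address function `ADDR₂` on `6` bits: `ADDR₂(x₁,x₂,y₀,y₁,y₂,y₃) = y_{2x₁+x₂}`. -/
def ADDR2 (x : Fin 6 → Bool) : Bool :=
  if x 0 then (if x 1 then x 5 else x 4) else (if x 1 then x 3 else x 2)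

/-- The family `F = {f_k}`: `f₁(x) = x`, and
`f_{k+1}(z, u, v) = f_k(u)` if `z = 0` and `f_k(v)` if `z = 1`,
where `u, v` are disjoint blocks of `2^k - 1` variables.
(`famF 0` is a dummy constant function; the family starts at `k = 1`.) -/
def famF : (k : ℕ) → (Fin (2 ^ k - 1) → Bool) → Bool
  | 0 => fun _ => false
  | 1 => fun x => x ⟨0, by norm_num⟩
  | k + 2 => fun x =>
      if x ⟨0, by
          have h : 1 < 2 ^ (k + 2) := Nat.one_lt_two_pow_iff.mpr (by omega)
          omega⟩ then
        famF (k + 1) (fun j => x ⟨1 + (2 ^ (k + 1) - 1) + (j : ℕ), by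
          have hj := j.isLt
          have h : 2 ^ (k + 2) = 2 * 2 ^ (k + 1) := by ring
          have h1 : 0 < 2 ^ (k + 1) := Nat.two_pow_pos _
          omega⟩)
      else
        famF (k + 1) (fun j => x ⟨1 + (j : ℕ), by
          have hj := j.isLt
          have h : 2 ^ (k + 2) = 2 * 2 ^ (k + 1) := by ring
          have h1 : 0 < 2 ^ (k + 1) := Nat.two_pow_pos _
          omega⟩)

/-!
Alternation, sensitivity and decision-tree depth all behave multiplicatively under block
composition. Sensitivity and depth are submultiplicative: a sensitive bit of `f ∘ g` is a
sensitive bit of `g` in a block whose value is sensitive for `f`, and a tree for `f ∘ g` runs a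
tree for `g` on each block that the tree for `f` queries. Alternation is supermultiplicative when
`g` maps `0…0` to `0` and `1…1` to `1`: filling the blocks one at a time in the order of a chain
for `f`, each along a chain for `g`, realises all alternations of `g` inside every block at which
`f` alternates. Since sensitivity bounds depth from below, `DT(g_k) = 3^k` follows from one input
of sensitivity `3^k`, obtained by placing in every block an input of `ADDR₂` of sensitivity `3`
with the required value. For `ADDR₂` itself, `alt ≥ 5`, `s ≤ 3` and `DT ≤ 3` are finite checks.
-/

section Blocks

variable {m n : ℕ}

def block (x : Fin (m * n) → Bool) (i : Fin m) : Fin n → Bool :=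
  fun j => x (finProdFinEquiv (i, j))

def unblock (y : Fin m → Fin n → Bool) : Fin (m * n) → Bool :=
  fun K => y (finProdFinEquiv.symm K).1 (finProdFinEquiv.symm K).2

@[simp]
theorem block_unblock (y : Fin m → Fin n → Bool) : block (unblock y) = y := by
  funext i j
  simp [block, unblock]

theorem block_flipBit (x : Fin (m * n) → Bool) (i : Fin m) (j : Fin n) :
    block (flipBit x (finProdFinEquiv (i, j))) =
      Function.update (block x) i (flipBit (block x i) j) := by
  funext i' j'
  simp only [block, flipBit, Function.update_apply, EmbeddingLike.apply_eq_iff_eq, Prod.mk.injEq]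
  by_cases hi : i' = i <;> by_cases hj : j' = j <;> simp [hi, hj, block]

theorem comp_apply (f : (Fin m → Bool) → Bool) (g : (Fin n → Bool) → Bool)
    (x : Fin (m * n) → Bool) : comp f g x = f (g ∘ block x) := rfl

end Blocks

namespace DTree

variable {n : ℕ}

theorem exists_eval_eq_of_dependsOn (S : Finset (Fin n)) :
    ∀ f : (Fin n → Bool) → Bool, DependsOn f S → ∃ t : DTree n, ∀ x, t.eval x = f x := by
  induction S using Finset.induction_on with
  | empty => exact fun f hf => ⟨leaf (f fun _ => false), fun x => hf (by simp)⟩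
  | insert i S _ ih =>
    intro f hf
    have restrict : ∀ b, DependsOn (fun x => f (Function.update x i b)) S :=
      fun b x y hxy => hf fun j hj => by
        by_cases hji : j = i
        · subst hji; simp
        · simp only [Function.update_of_ne hji]
          exact hxy j (by simpa [hji] using hj)
    obtain ⟨t0, ht0⟩ := ih _ (restrict false)
    obtain ⟨t1, ht1⟩ := ih _ (restrict true)
    refine ⟨node i t0 t1, fun x => ?_⟩
    conv_rhs => rw [← Function.update_eq_self i x]
    cases hx : x i <;> simp [eval, hx, ht0, ht1]

theorem exists_eval_eq (f : (Fin n → Bool) → Bool) : ∃ t : DTree n, ∀ x, t.eval x = f x :=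
  exists_eval_eq_of_dependsOn Finset.univ f (by simpa using dependsOn_univ f)

def queries : DTree n → (Fin n → Bool) → Finset (Fin n)
  | leaf _, _ => ∅
  | node i t0 t1, x => insert i (if x i then queries t1 x else queries t0 x)

theorem card_queries_le_depth (t : DTree n) (x : Fin n → Bool) :
    (t.queries x).card ≤ t.depth := by
  induction t with
  | leaf => simp [queries]
  | node i t0 t1 ih0 ih1 =>
    refine (Finset.card_insert_le _ _).trans ?_
    cases x i <;> simp only [depth, Bool.false_eq_true, if_true, if_false] <;> omega

theorem eval_flipBit_of_notMem_queries (t : DTree n) {x : Fin n → Bool} {i : Fin n}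
    (hi : i ∉ t.queries x) : t.eval (flipBit x i) = t.eval x := by
  induction t with
  | leaf => rfl
  | node j t0 t1 ih0 ih1 =>
    simp only [queries, Finset.mem_insert, not_or] at hi
    have hxj : flipBit x i j = x j := Function.update_of_ne (Ne.symm hi.1) _ _
    cases hx : x j <;> simp_all [eval]

theorem sensAt_le_depth {f : (Fin n → Bool) → Bool} {t : DTree n} (ht : ∀ x, t.eval x = f x)
    (x : Fin n → Bool) : sensAt f x ≤ t.depth := by
  refine le_trans (Finset.card_le_card fun i hi => ?_) (t.card_queries_le_depth x)
  by_contra hq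
  simp only [Finset.mem_filter, ← ht] at hi
  exact hi.2 (eval_flipBit_of_notMem_queries t hq)

def graft {N : ℕ} (e : Fin n → Fin N) (L : Bool → DTree N) : DTree n → DTree N
  | leaf b => L b
  | node j t0 t1 => node (e j) (graft e L t0) (graft e L t1)

theorem eval_graft {N : ℕ} (e : Fin n → Fin N) (L : Bool → DTree N) (t : DTree n)
    (x : Fin N → Bool) : (graft e L t).eval x = (L (t.eval (x ∘ e))).eval x := by
  induction t with
  | leaf => rfl
  | node j t0 t1 ih0 ih1 => cases hx : x (e j) <;> simp_all [graft, eval]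

theorem depth_graft_le {N : ℕ} (e : Fin n → Fin N) (L : Bool → DTree N) (t : DTree n) :
    (graft e L t).depth ≤ t.depth + max (L false).depth (L true).depth := by
  induction t with
  | leaf b => cases b <;> simp [graft, depth]
  | node j t0 t1 ih0 ih1 => simp only [graft, depth]; omega

def comp {m : ℕ} (T : DTree m) (tg : DTree n) : DTree (m * n) :=
  match T with
  | leaf b => leaf b
  | node i t0 t1 =>
    graft (fun j => finProdFinEquiv (i, j)) (fun b => cond b (t1.comp tg) (t0.comp tg)) tg

theorem eval_comp {m : ℕ} (T : DTree m) (tg : DTree n) (x : Fin (m * n) → Bool) :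
    (T.comp tg).eval x = T.eval fun i => tg.eval (block x i) := by
  induction T with
  | leaf => rfl
  | node i t0 t1 ih0 ih1 =>
    simp only [comp, eval_graft, eval]
    change (cond (tg.eval (block x i)) (t1.comp tg) (t0.comp tg)).eval x = _
    rcases Bool.eq_false_or_eq_true (tg.eval (block x i)) with h | h <;> simp [h, ih0, ih1]

theorem depth_comp_le {m : ℕ} (T : DTree m) (tg : DTree n) :
    (T.comp tg).depth ≤ T.depth * tg.depth := by
  induction T with
  | leaf => simp [comp, depth]
  | node i t0 t1 ih0 ih1 =>
    refine (depth_graft_le _ _ _).trans ?_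
    simp only [cond_false, cond_true, depth, add_mul, one_mul,
      max_mul_of_nonneg _ _ (Nat.zero_le _)]
    omega

end DTree

section DecisionTreeComplexity

variable {m n : ℕ}

theorem DT_le_depth {f : (Fin n → Bool) → Bool} {t : DTree n} (ht : ∀ x, t.eval x = f x) :
    DT f ≤ t.depth :=
  Nat.sInf_le ⟨t, ht, rfl⟩

theorem exists_depth_eq_DT (f : (Fin n → Bool) → Bool) :
    ∃ t : DTree n, (∀ x, t.eval x = f x) ∧ t.depth = DT f :=
  let ⟨t, ht⟩ := DTree.exists_eval_eq f
  Nat.sInf_mem (s := {d | ∃ t : DTree n, (∀ x, t.eval x = f x) ∧ t.depth = d}) ⟨t.depth, t, ht, rfl⟩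

theorem sensAt_le_DT (f : (Fin n → Bool) → Bool) (x : Fin n → Bool) : sensAt f x ≤ DT f := by
  obtain ⟨t, ht, hdepth⟩ := exists_depth_eq_DT f
  exact hdepth ▸ DTree.sensAt_le_depth ht x

theorem DT_comp_le (f : (Fin m → Bool) → Bool) (g : (Fin n → Bool) → Bool) :
    DT (comp f g) ≤ DT f * DT g := by
  obtain ⟨tf, htf, hdf⟩ := exists_depth_eq_DT f
  obtain ⟨tg, htg, hdg⟩ := exists_depth_eq_DT g
  calc DT (comp f g) ≤ (tf.comp tg).depth :=
        DT_le_depth fun x => by simp only [DTree.eval_comp, htf, htg]; rfl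
    _ ≤ DT f * DT g := hdf ▸ hdg ▸ DTree.depth_comp_le tf tg

end DecisionTreeComplexity

section Sensitivity

variable {m n : ℕ} {f : (Fin m → Bool) → Bool} {g : (Fin n → Bool) → Bool}

theorem apply_update_ne_iff (z : Fin m → Bool) (i : Fin m) (v : Bool) :
    f (Function.update z i v) ≠ f z ↔ v ≠ z i ∧ f (flipBit z i) ≠ f z := by
  by_cases hv : v = z i
  · simp [hv]
  · rw [Bool.eq_not_of_ne hv]
    simp [flipBit]

theorem comp_flipBit_ne_iff (x : Fin (m * n) → Bool) (i : Fin m) (j : Fin n) :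
    comp f g (flipBit x (finProdFinEquiv (i, j))) ≠ comp f g x ↔
      f (flipBit (g ∘ block x) i) ≠ f (g ∘ block x) ∧
        g (flipBit (block x i) j) ≠ g (block x i) := by
  rw [comp_apply, comp_apply, block_flipBit, Function.comp_update, apply_update_ne_iff, and_comm]
  rfl

theorem sensAt_comp (x : Fin (m * n) → Bool) :
    sensAt (comp f g) x = ∑ i ∈ Finset.univ.filter
      (fun i => f (flipBit (g ∘ block x) i) ≠ f (g ∘ block x)), sensAt g (block x i) := by
  simp only [sensAt, Finset.card_filter, Finset.sum_filter]
  rw [← finProdFinEquiv.sum_comp, Fintype.sum_prod_type]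
  simp only [comp_flipBit_ne_iff, ite_and]
  refine Finset.sum_congr rfl fun i _ => ?_
  split_ifs <;> simp

theorem le_sens (f : (Fin n → Bool) → Bool) (x : Fin n → Bool) : sensAt f x ≤ sens f :=
  Finset.le_sup (Finset.mem_univ x)

theorem sens_comp_le : sens (comp f g) ≤ sens f * sens g :=
  Finset.sup_le fun x _ => calc
    sensAt (comp f g) x ≤ sensAt f (g ∘ block x) * sens g := by
      rw [sensAt_comp]
      exact Finset.sum_le_card_nsmul _ _ _ fun i _ => le_sens g (block x i)
    _ ≤ sens f * sens g := Nat.mul_le_mul_right _ (le_sens f _)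

theorem exists_le_sensAt_comp {z : Fin m → Bool} {r s : ℕ} (hz : r ≤ sensAt f z)
    (hg : ∀ b, ∃ y, g y = b ∧ s ≤ sensAt g y) : ∃ x, r * s ≤ sensAt (comp f g) x := by
  choose u hu hs using hg
  refine ⟨unblock fun i => u (z i), ?_⟩
  have hblocks : g ∘ block (unblock fun i => u (z i)) = z := by
    funext i
    simp [hu]
  rw [sensAt_comp, hblocks]
  calc r * s ≤ sensAt f z * s := Nat.mul_le_mul_right _ hz
    _ ≤ _ := Finset.card_nsmul_le_sum _ _ _ fun i _ => by simpa using hs (z i)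

end Sensitivity

theorem Nat.add_mul_lt_mul_add_iff {n i a j c : ℕ} (hj : j < n) (hc : c ≤ n) :
    j + n * i < n * a + c ↔ i < a ∨ i = a ∧ j < c := by
  rcases lt_trichotomy i a with h | rfl | h
  · have := Nat.mul_le_mul_left n h
    rw [Nat.mul_succ] at this
    simp only [h, true_or, iff_true]
    omega
  · simp only [lt_irrefl, true_and, false_or]
    omega
  · have := Nat.mul_le_mul_left n h
    rw [Nat.mul_succ] at this
    simp only [h.not_gt, h.ne', false_or, false_and, iff_false, not_lt]
    omega

section Alternation

variable {m n : ℕ}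

theorem chainOf_castSucc_symm_apply (σ : Equiv.Perm (Fin n)) (a : Fin n) :
    chainOf σ a.castSucc (σ.symm a) = false := by
  simp [chainOf]

theorem chainOf_succ (σ : Equiv.Perm (Fin n)) (a : Fin n) :
    chainOf σ a.succ = Function.update (chainOf σ a.castSucc) (σ.symm a) true := by
  funext i
  by_cases hi : i = σ.symm a
  · subst hi; simp [chainOf]
  · have : (σ i : ℕ) ≠ a := fun h => hi (by rw [← Fin.ext h, Equiv.symm_apply_apply])
    simp only [chainOf, Function.update_of_ne hi, Fin.val_succ, Fin.val_castSucc]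
    exact decide_eq_decide.mpr (by omega)

theorem block_chainOf_permCongr (σf : Equiv.Perm (Fin m)) (σg : Equiv.Perm (Fin n))
    {T : Fin (m * n + 1)} {a : Fin m} {c : Fin (n + 1)} (hT : (T : ℕ) = n * a + c) (i : Fin m) :
    block (chainOf (finProdFinEquiv.permCongr (σf.prodCongr σg)) T) i =
      fun j => decide ((σf i : ℕ) < a ∨ (σf i : ℕ) = a ∧ (σg j : ℕ) < c) := by
  funext j
  simp only [block, chainOf, Equiv.permCongr_apply, Equiv.symm_apply_apply,
    Equiv.prodCongr_apply, Prod.map, finProdFinEquiv_apply_val, hT]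
  exact decide_eq_decide.mpr (Nat.add_mul_lt_mul_add_iff (σg j).isLt (Nat.lt_succ_iff.mp c.isLt))

theorem comp_chainOf_permCongr {f : (Fin m → Bool) → Bool} {g : (Fin n → Bool) → Bool}
    (hg0 : g (fun _ => false) = false) (hg1 : g (fun _ => true) = true)
    (σf : Equiv.Perm (Fin m)) (σg : Equiv.Perm (Fin n))
    {T : Fin (m * n + 1)} {a : Fin m} {c : Fin (n + 1)} (hT : (T : ℕ) = n * a + c) :
    comp f g (chainOf (finProdFinEquiv.permCongr (σf.prodCongr σg)) T) =
      f (Function.update (chainOf σf a.castSucc) (σf.symm a) (g (chainOf σg c))) := by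
  rw [comp_apply]
  congr 1
  funext i
  simp only [Function.comp_apply, block_chainOf_permCongr σf σg hT]
  by_cases hi : i = σf.symm a
  · subst hi
    simp only [Function.update_self, Equiv.apply_symm_apply, lt_irrefl, true_and, false_or]
    rfl
  · have : (σf i : ℕ) ≠ a := fun h => hi (by rw [← Fin.ext h, Equiv.symm_apply_apply])
    rw [Function.update_of_ne hi]
    rcases this.lt_or_gt with h | h
    · simp [h, hg1, chainOf]
    · simp [h.not_gt, this, hg0, chainOf]

theorem altOn_mul_le_altOn_comp (hg0 : g (fun _ => false) = false)
    (hg1 : g (fun _ => true) = true) (σf : Equiv.Perm (Fin m)) (σg : Equiv.Perm (Fin n)) :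
    altOn f σf * altOn g σg ≤ altOn (comp f g) (finProdFinEquiv.permCongr (σf.prodCongr σg)) := by
  unfold altOn
  rw [← Finset.card_product]
  refine Finset.card_le_card_of_injOn finProdFinEquiv (fun ⟨a, b⟩ hab => ?_)
    finProdFinEquiv.injective.injOn
  simp only [Finset.coe_product, Finset.coe_filter, Set.mem_prod, Set.mem_ofPred_eq,
    Finset.mem_univ, true_and] at hab ⊢
  obtain ⟨hf, hg⟩ := hab
  rw [comp_chainOf_permCongr hg0 hg1 σf σg (a := a) (c := b.castSucc) (by simp; ring),
    comp_chainOf_permCongr hg0 hg1 σf σg (a := a) (c := b.succ) (by simp; ring)]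
  have hf' : f (Function.update (chainOf σf a.castSucc) (σf.symm a) false) ≠
      f (Function.update (chainOf σf a.castSucc) (σf.symm a) true) := by
    rwa [← chainOf_succ, Function.update_eq_self_iff.mpr (chainOf_castSucc_symm_apply σf a).symm]
  revert hg
  cases g (chainOf σg b.castSucc) <;> cases g (chainOf σg b.succ) <;> simp [hf', hf'.symm]

theorem alt_mul_le_alt_comp (hg0 : g (fun _ => false) = false)
    (hg1 : g (fun _ => true) = true) : alt f * alt g ≤ alt (comp f g) := by
  obtain ⟨σf, -, hσf⟩ := Finset.exists_mem_eq_sup Finset.univ Finset.univ_nonempty (altOn f)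
  obtain ⟨σg, -, hσg⟩ := Finset.exists_mem_eq_sup Finset.univ Finset.univ_nonempty (altOn g)
  calc alt f * alt g = altOn f σf * altOn g σg := by rw [alt, alt, hσf, hσg]
    _ ≤ _ := altOn_mul_le_altOn_comp hg0 hg1 σf σg
    _ ≤ alt (comp f g) := Finset.le_sup (Finset.mem_univ _)

end Alternation

section Iteration

variable {n : ℕ} (h : (Fin n → Bool) → Bool)

theorem map_precomp_finCast {α : Sort*} (M : (n : ℕ) → ((Fin n → Bool) → Bool) → α)
    {a b : ℕ} (hab : a = b) (F : (Fin a → Bool) → Bool) :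
    M b (fun x => F fun i => x (Fin.cast hab i)) = M a F := by
  subst hab
  rfl

theorem map_iterComp_zero {α : Sort*} (M : (n : ℕ) → ((Fin n → Bool) → Bool) → α) :
    M (n ^ 1) (iterComp h 0) = M n h :=
  map_precomp_finCast M (pow_one n).symm h

theorem map_iterComp_succ {α : Sort*} (M : (n : ℕ) → ((Fin n → Bool) → Bool) → α) (k : ℕ) :
    M (n ^ (k + 2)) (iterComp h (k + 1)) = M (n ^ (k + 1) * n) (comp (iterComp h k) h) :=
  map_precomp_finCast M (pow_succ n (k + 1)).symm _

theorem pow_alt_le_alt_iterComp (h0 : h (fun _ => false) = false)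
    (h1 : h (fun _ => true) = true) (k : ℕ) : alt h ^ (k + 1) ≤ alt (iterComp h k) := by
  induction k with
  | zero => exact (map_iterComp_zero h fun _ F => alt F).ge.trans' (pow_one _).le
  | succ k ih =>
    rw [map_iterComp_succ h fun _ F => alt F, pow_succ (alt h)]
    exact (Nat.mul_le_mul_right _ ih).trans (alt_mul_le_alt_comp h0 h1)

theorem sens_iterComp_le (k : ℕ) : sens (iterComp h k) ≤ sens h ^ (k + 1) := by
  induction k with
  | zero => exact (map_iterComp_zero h fun _ F => sens F).le.trans (pow_one _).ge
  | succ k ih =>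
    rw [map_iterComp_succ h fun _ F => sens F, pow_succ (sens h)]
    exact sens_comp_le.trans (Nat.mul_le_mul_right _ ih)

theorem DT_iterComp_le (k : ℕ) : DT (iterComp h k) ≤ DT h ^ (k + 1) := by
  induction k with
  | zero => exact (map_iterComp_zero h fun _ F => DT F).le.trans (pow_one _).ge
  | succ k ih =>
    rw [map_iterComp_succ h fun _ F => DT F, pow_succ (DT h)]
    exact (DT_comp_le _ h).trans (Nat.mul_le_mul_right _ ih)

theorem exists_pow_le_sensAt_iterComp {s : ℕ} (hs : ∀ b, ∃ y, h y = b ∧ s ≤ sensAt h y)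
    (k : ℕ) : ∃ x, s ^ (k + 1) ≤ sensAt (iterComp h k) x := by
  induction k with
  | zero =>
    obtain ⟨y, -, hy⟩ := hs true
    exact (map_iterComp_zero h fun _ F => ∃ x, s ^ 1 ≤ sensAt F x).mpr ⟨y, by simpa using hy⟩
  | succ k ih =>
    obtain ⟨z, hz⟩ := ih
    exact (map_iterComp_succ h (fun _ F => ∃ x, s ^ (k + 2) ≤ sensAt F x) k).mpr
      (exists_le_sensAt_comp hz hs)

end Iteration

theorem Real.pow_rpow_logb {b x : ℝ} (b_pos : 0 < b) (b_ne_one : b ≠ 1) (hx : 0 < x) (k : ℕ) :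
    (b ^ k) ^ Real.logb b x = x ^ k := by
  rw [← Real.rpow_pow_comm b_pos.le, Real.rpow_logb b_pos b_ne_one hx]

/-- Flips `y₀, x₂, y₁, x₁, y₃, y₂` in this order; `ADDR₂` changes value at each of the first
five steps. -/
def addr2AltPerm : Equiv.Perm (Fin 6) where
  toFun := ![3, 1, 0, 2, 5, 4]
  invFun := ![2, 1, 3, 0, 5, 4]
  left_inv := by decide
  right_inv := by decide

theorem five_le_alt_ADDR2 : 5 ≤ alt ADDR2 :=
  (by decide : altOn ADDR2 addr2AltPerm = 5) ▸ Finset.le_sup (Finset.mem_univ _)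

theorem sens_ADDR2_le : sens ADDR2 ≤ 3 :=
  Finset.sup_le fun x _ => by revert x; decide

theorem DT_ADDR2_le : DT ADDR2 ≤ 3 :=
  DT_le_depth (t := .node 0
    (.node 1 (.node 2 (.leaf false) (.leaf true)) (.node 3 (.leaf false) (.leaf true)))
    (.node 1 (.node 4 (.leaf false) (.leaf true)) (.node 5 (.leaf false) (.leaf true))))
    (by decide)

theorem exists_ADDR2_eq_three_le_sensAt (b : Bool) : ∃ y, ADDR2 y = b ∧ 3 ≤ sensAt ADDR2 y := by
  cases b
  · exact ⟨![false, false, false, true, true, true], by decide⟩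
  · exact ⟨![false, false, true, false, false, false], by decide⟩

/-- For every `k ≥ 1`, the function `g_k = ADDR₂^{∘k}` (the `k`-fold
composition of the address function, on `n_k = 6^k` variables; recall
`iterComp ADDR2 (k - 1)` is the `k`-fold composition) satisfies `alt (g_k) ≥ 5 ^ k`
and `s (g_k) ≤ 3 ^ k`, hence `alt (g_k) ≥ s (g_k) ^ (log_3 5)`; moreover
`DT (g_k) = 3 ^ k = n_k ^ (log_6 3)`. -/
theorem addr2_iter_props (k : ℕ) (hk : 1 ≤ k) :
    5 ^ k ≤ alt (iterComp ADDR2 (k - 1)) ∧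
    sens (iterComp ADDR2 (k - 1)) ≤ 3 ^ k ∧
    ((sens (iterComp ADDR2 (k - 1)) : ℝ)) ^ (Real.logb 3 5) ≤
      (alt (iterComp ADDR2 (k - 1)) : ℝ) ∧
    DT (iterComp ADDR2 (k - 1)) = 3 ^ k ∧
    ((3 : ℝ) ^ k = ((6 : ℝ) ^ k) ^ (Real.logb 6 3)) := by
  obtain ⟨k, rfl⟩ := Nat.exists_eq_add_of_le' hk
  rw [Nat.add_sub_cancel]
  have halt : 5 ^ (k + 1) ≤ alt (iterComp ADDR2 k) :=
    (Nat.pow_le_pow_left five_le_alt_ADDR2 _).trans (pow_alt_le_alt_iterComp ADDR2 rfl rfl k)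
  have hsens : sens (iterComp ADDR2 k) ≤ 3 ^ (k + 1) :=
    (sens_iterComp_le ADDR2 k).trans (Nat.pow_le_pow_left sens_ADDR2_le _)
  have hDT : DT (iterComp ADDR2 k) = 3 ^ (k + 1) := by
    obtain ⟨x, hx⟩ := exists_pow_le_sensAt_iterComp ADDR2 exists_ADDR2_eq_three_le_sensAt k
    exact le_antisymm ((DT_iterComp_le ADDR2 k).trans (Nat.pow_le_pow_left DT_ADDR2_le _))
      (hx.trans (sensAt_le_DT _ x))
  refine ⟨halt, hsens, ?_, hDT,
    (Real.pow_rpow_logb (by norm_num) (by norm_num) (by norm_num) _).symm⟩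
  calc (sens (iterComp ADDR2 k) : ℝ) ^ Real.logb 3 5 ≤ ((3 : ℝ) ^ (k + 1)) ^ Real.logb 3 5 :=
        Real.rpow_le_rpow (by positivity) (by exact_mod_cast hsens)
          (Real.logb_nonneg (by norm_num) (by norm_num))
    _ = 5 ^ (k + 1) := Real.pow_rpow_logb (by norm_num) (by norm_num) (by norm_num) _
    _ ≤ alt (iterComp ADDR2 k) := by exact_mod_cast halt
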